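/- arXiv:0912.0431 — 5 statements merged into one kernel-verified Lean document; each statement's English description precedes it below -/
import Mathlib

section
/- For every natural number n > 1 there exists an n-optimal matrix of partitions, i.e., a family (P_{k,m} : k ∈ ℕ, m < n) of partitions of ℕ into infinitely many infinite pieces P_{k,m} = {a_i^{k,m} : i ∈ ℕ} such that (i) for every column m < n and every finite selection of one piece from each of finitely many rows of column m, the intersection of the selected pieces is infinite, and (ii) whenever one selects n pieces a^{k(0),m(0)}_{i(0)}, …, a^{k(n-1),m(n-1)}_{i(n-1)} with pairwise distinct pairs (k(j), m(j)) and with not all column indices m(j) equal, the intersection of these n pieces is a singleton. -/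
/-- A partition of ℕ into infinitely many (pairwise disjoint, covering) infinite pieces,
indexed by ℕ. -/
def IsInfinitePartition (a : ℕ → Set ℕ) : Prop :=
  (∀ i, (a i).Infinite) ∧ (∀ i j, i ≠ j → Disjoint (a i) (a j)) ∧ (⋃ i, a i) = Set.univ

/-- An `n`-optimal matrix of partitions: a family `P (k, m) = {a k m i | i ∈ ℕ}`
(`k ∈ ℕ` a row index, `m < n` a column index) of partitions of ℕ into infinite pieces
such that (i) any intersection of finitely many pieces taken from distinct rows of a
single column is infinite, and (ii) any intersection of `n` pieces with pairwise distinct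
(row, column) index pairs, not all from the same column, is a singleton. -/
def OptimalMatrix (n : ℕ) (a : ℕ → Fin n → ℕ → Set ℕ) : Prop :=
  (∀ k m, IsInfinitePartition (a k m)) ∧
  (∀ m : Fin n, ∀ k : ℕ, ∀ r i : Fin k → ℕ, Function.Injective r →
    (⋂ ℓ, a (r ℓ) m (i ℓ)).Infinite) ∧
  (∀ i k : Fin n → ℕ, ∀ m : Fin n → Fin n,
    (∀ j ℓ : Fin n, j ≠ ℓ → (k j, m j) ≠ (k ℓ, m ℓ)) →
    (∃ j ℓ : Fin n, m j ≠ m ℓ) →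
    ∃ x : ℕ, (⋂ j, a (k j) (m j) (i j)) = {x})

/-!
Each point `x ∈ ℕ` carries a colouring `c x : ℕ × Fin n → ℕ`, and `x` lies in the piece
`a k m i` iff `c x (k, m) = i`. The points are built in stages from an enumeration of all
finite requests (finite partial colourings), each listed infinitely often. Point `s` takes
the values prescribed by its request if that request lies in a single column, or if it
prescribes `n` keys in several columns and no earlier point realizes it; every other value of
`c s` is new at its key. Column requests are then realized infinitely often. If `t < s` both
realized a cross request, `s` would share values with `t` only at keys of its own request,
which therefore contains all `n` keys of the cross request: impossible for a single-column
request, and for a cross request it means `t` had already realized it.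
-/

open Finset

namespace Realization

variable {Q : Type*}

def Realizes (f : Q → ℕ) (σ : Finset (Q × ℕ)) : Prop := ∀ p ∈ σ, f p.1 = p.2

def IsFunctional (σ : Finset (Q × ℕ)) : Prop := Set.InjOn Prod.fst (σ : Set (Q × ℕ))

section Families

variable {ι : Type*} [Fintype ι] [DecidableEq Q]

theorem realizes_image_iff (f : Q → ℕ) (p : ι → Q × ℕ) :
    Realizes f (univ.image p) ↔ ∀ j, f (p j).1 = (p j).2 := by
  simp [Realizes]

theorem isFunctional_image {p : ι → Q × ℕ} (hp : Function.Injective (Prod.fst ∘ p)) :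
    IsFunctional (univ.image p) := by
  rintro _ hx _ hy hxy
  obtain ⟨i, -, rfl⟩ := mem_image.mp hx
  obtain ⟨j, -, rfl⟩ := mem_image.mp hy
  rw [hp hxy]

end Families

variable [Countable Q]

noncomputable def stage : ℕ ≃ Finset (Q × ℕ) × ℕ := Classical.choice nonempty_equiv_of_countable

variable (I U : Set (Finset (Q × ℕ)))

open Classical in
noncomputable def color (s : ℕ) (q : Q) : ℕ :=
  if h : ((stage s).1 ∈ I ∨ ((stage s).1 ∈ U ∧ ∀ t : Fin s, ¬ Realizes (color t) (stage s).1)) ∧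
      ∃ v, (q, v) ∈ (stage s).1 then
    h.2.choose
  else
    (univ.sup fun t : Fin s => color t q) + 1
termination_by s
decreasing_by all_goals exact Fin.isLt ‹_›

def IsActive (s : ℕ) : Prop :=
  (stage s).1 ∈ I ∨ ((stage s).1 ∈ U ∧ ∀ t : Fin s, ¬ Realizes (color I U t) (stage s).1)

open Classical in
theorem color_eq (s : ℕ) (q : Q) : color I U s q =
    if h : IsActive I U s ∧ ∃ v, (q, v) ∈ (stage s).1 then h.2.choose
    else (univ.sup fun t : Fin s => color I U t q) + 1 := by
  rw [color]
  unfold IsActive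
  congr

variable {I U}

theorem realizes_stage {s : ℕ} (hs : IsActive I U s) (hσ : IsFunctional (stage (Q := Q) s).1) :
    Realizes (color I U s) (stage s).1 := by
  intro p hp
  have hex : ∃ v, (p.1, v) ∈ (stage s).1 := ⟨p.2, hp⟩
  rw [color_eq, dif_pos ⟨hs, hex⟩]
  exact congrArg Prod.snd (hσ hex.choose_spec hp rfl)

theorem isActive_of_color_eq {t s : ℕ} (hts : t < s) {q : Q}
    (h : color I U s q = color I U t q) : IsActive I U s ∧ ∃ v, (q, v) ∈ (stage s).1 := by
  by_contra hc
  have hle : color I U t q ≤ univ.sup fun t : Fin s => color I U t q :=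
    le_sup (f := fun t : Fin s => color I U t q) (mem_univ ⟨t, hts⟩)
  rw [color_eq, dif_neg hc] at h
  omega

theorem infinite_setOf_realizes {σ : Finset (Q × ℕ)} (hσI : σ ∈ I) (hσ : IsFunctional σ) :
    {x | Realizes (color I U x) σ}.Infinite := by
  refine Set.infinite_of_injective_forall_mem (f := fun j => stage.symm (σ, j)) ?_ fun j => ?_
  · intro j j' h
    simpa using congrArg Prod.snd (stage.symm.injective h)
  · have hs : (stage (stage.symm (σ, j))).1 = σ := by simp
    generalize stage.symm (σ, j) = s at hs ⊢
    subst hs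
    exact realizes_stage (Or.inl hσI) hσ

theorem exists_realizes {σ : Finset (Q × ℕ)} (hσU : σ ∈ U) (hσ : IsFunctional σ) :
    ∃ x, Realizes (color I U x) σ := by
  obtain ⟨s, rfl⟩ : ∃ s, (stage s).1 = σ := ⟨stage.symm (σ, 0), by simp⟩
  by_cases hprev : ∃ t : Fin s, Realizes (color I U t) (stage s).1
  · obtain ⟨t, ht⟩ := hprev
    exact ⟨t, ht⟩
  · simp only [not_exists] at hprev
    exact ⟨s, realizes_stage (Or.inr ⟨hσU, hprev⟩) hσ⟩

variable [DecidableEq Q]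

theorem not_realizes_of_lt
    (hIU : ∀ σ ∈ U, ∀ τ ∈ I, ¬ σ.image Prod.fst ⊆ τ.image Prod.fst)
    (hUU : ∀ σ ∈ U, ∀ τ ∈ U, σ.image Prod.fst ⊆ τ.image Prod.fst →
      τ.image Prod.fst ⊆ σ.image Prod.fst)
    (hfun : ∀ σ ∈ U, IsFunctional σ)
    {σ : Finset (Q × ℕ)} (hσU : σ ∈ U) (hne : σ.Nonempty) {t s : ℕ} (hts : t < s)
    (ht : Realizes (color I U t) σ) : ¬ Realizes (color I U s) σ := by
  intro hs
  have hagree : ∀ p ∈ σ, IsActive I U s ∧ ∃ v, (p.1, v) ∈ (stage s).1 := fun p hp =>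
    isActive_of_color_eq hts ((hs p hp).trans (ht p hp).symm)
  have hsub : σ.image Prod.fst ⊆ (stage s).1.image Prod.fst := by
    intro q hq
    obtain ⟨p, hp, rfl⟩ := mem_image.mp hq
    obtain ⟨v, hv⟩ := (hagree p hp).2
    exact mem_image.mpr ⟨_, hv, rfl⟩
  obtain ⟨p₀, hp₀⟩ := hne
  rcases (hagree p₀ hp₀).1 with hI | ⟨hU, hnew⟩
  · exact hIU σ hσU _ hI hsub
  · refine hnew ⟨t, hts⟩ fun p hp => ?_
    obtain ⟨a, ha, hap⟩ := mem_image.mp (hUU σ hσU _ hU hsub (mem_image_of_mem Prod.fst hp))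
    calc color I U t p.1 = a.2 := hap ▸ ht a ha
      _ = color I U s p.1 := hap ▸ (hs a ha).symm
      _ = p.2 := realizes_stage (Or.inr ⟨hU, hnew⟩) (hfun _ hU) p hp

theorem exists_realizations (hI : ∀ σ ∈ I, IsFunctional σ)
    (hU : ∀ σ ∈ U, IsFunctional σ ∧ σ.Nonempty)
    (hIU : ∀ σ ∈ U, ∀ τ ∈ I, ¬ σ.image Prod.fst ⊆ τ.image Prod.fst)
    (hUU : ∀ σ ∈ U, ∀ τ ∈ U, σ.image Prod.fst ⊆ τ.image Prod.fst →
      τ.image Prod.fst ⊆ σ.image Prod.fst) :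
    ∃ c : ℕ → Q → ℕ, (∀ σ ∈ I, {x | Realizes (c x) σ}.Infinite) ∧
      ∀ σ ∈ U, ∃! x, Realizes (c x) σ := by
  refine ⟨color I U, fun σ hσ => infinite_setOf_realizes hσ (hI σ hσ), fun σ hσ => ?_⟩
  have hfun : ∀ σ ∈ U, IsFunctional σ := fun σ hσ => (hU σ hσ).1
  obtain ⟨x, hx⟩ := exists_realizes hσ (hfun σ hσ)
  refine ⟨x, hx, fun y hy => ?_⟩
  rcases lt_trichotomy y x with hyx | rfl | hxy
  · exact absurd hx (not_realizes_of_lt hIU hUU hfun hσ (hU σ hσ).2 hyx hy)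
  · rfl
  · exact absurd hy (not_realizes_of_lt hIU hUU hfun hσ (hU σ hσ).2 hxy hx)

end Realization

namespace MatrixOfPartitions

open Realization

variable {n : ℕ}

def SingleColumn (σ : Finset ((ℕ × Fin n) × ℕ)) : Prop := ∀ p ∈ σ, ∀ p' ∈ σ, p.1.2 = p'.1.2

variable (n) in
def columnRequests : Set (Finset ((ℕ × Fin n) × ℕ)) := {σ | IsFunctional σ ∧ SingleColumn σ}

variable (n) in
def crossRequests : Set (Finset ((ℕ × Fin n) × ℕ)) :=
  {σ | IsFunctional σ ∧ σ.card = n ∧ ¬ SingleColumn σ}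

theorem SingleColumn.of_image_fst_subset {σ τ : Finset ((ℕ × Fin n) × ℕ)}
    (h : σ.image Prod.fst ⊆ τ.image Prod.fst) (hτ : SingleColumn τ) : SingleColumn σ := by
  intro p hp p' hp'
  obtain ⟨q, hq, hqp⟩ := mem_image.mp (h (mem_image_of_mem Prod.fst hp))
  obtain ⟨q', hq', hqp'⟩ := mem_image.mp (h (mem_image_of_mem Prod.fst hp'))
  rw [← hqp, ← hqp']
  exact hτ q hq q' hq'

theorem card_image_fst_of_mem_crossRequests {σ : Finset ((ℕ × Fin n) × ℕ)}
    (hσ : σ ∈ crossRequests n) : (σ.image Prod.fst).card = n :=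
  (card_image_of_injOn hσ.1).trans hσ.2.1

theorem exists_coloring : ∃ c : ℕ → ℕ × Fin n → ℕ,
    (∀ σ ∈ columnRequests n, {x | Realizes (c x) σ}.Infinite) ∧
      ∀ σ ∈ crossRequests n, ∃! x, Realizes (c x) σ := by
  refine exists_realizations (fun σ hσ => hσ.1) (fun σ hσ => ⟨hσ.1, ?_⟩) ?_ ?_
  · exact nonempty_iff_ne_empty.mpr fun h => hσ.2.2 (by simp [h, SingleColumn])
  · intro σ hσ τ hτ hsub
    exact hσ.2.2 (hτ.2.of_image_fst_subset hsub)
  · intro σ hσ τ hτ hsub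
    exact (eq_of_subset_of_card_le hsub (by
      rw [card_image_fst_of_mem_crossRequests hσ, card_image_fst_of_mem_crossRequests hτ])).ge

variable {c : ℕ → ℕ × Fin n → ℕ}

theorem iInter_column_infinite (hc : ∀ σ ∈ columnRequests n, {x | Realizes (c x) σ}.Infinite)
    (m : Fin n) {K : ℕ} {r : Fin K → ℕ} (hr : Function.Injective r) (i : Fin K → ℕ) :
    (⋂ ℓ, {x | c x (r ℓ, m) = i ℓ}).Infinite := by
  have hσ : univ.image (fun ℓ => ((r ℓ, m), i ℓ)) ∈ columnRequests n := by
    refine ⟨isFunctional_image fun ℓ ℓ' h => hr (congrArg Prod.fst h), ?_⟩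
    simp [SingleColumn]
  convert hc _ hσ using 1
  ext x
  simp [realizes_image_iff]

theorem iInter_cross_eq_singleton (hc : ∀ σ ∈ crossRequests n, ∃! x, Realizes (c x) σ)
    {k i : Fin n → ℕ} {m : Fin n → Fin n} (hkm : Function.Injective fun j => (k j, m j))
    (hm : ∃ j ℓ, m j ≠ m ℓ) : ∃ x, ⋂ j, {x | c x (k j, m j) = i j} = {x} := by
  have hinj : Function.Injective fun j => ((k j, m j), i j) :=
    fun j ℓ h => hkm (congrArg Prod.fst h)
  have hσ : univ.image (fun j => ((k j, m j), i j)) ∈ crossRequests n := by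
    refine ⟨isFunctional_image hkm, by rw [card_image_of_injective _ hinj, card_fin], ?_⟩
    obtain ⟨j, ℓ, hjℓ⟩ := hm
    exact fun h => hjℓ (h _ (mem_image_of_mem _ (mem_univ j)) _ (mem_image_of_mem _ (mem_univ ℓ)))
  obtain ⟨x, hx, hxu⟩ := hc _ hσ
  refine ⟨x, Set.eq_singleton_iff_unique_mem.mpr ⟨?_, fun y hy => hxu y ?_⟩⟩
  · simpa [realizes_image_iff] using hx
  · simpa [realizes_image_iff] using hy

theorem optimalMatrix_of_coloring
    (hcol : ∀ σ ∈ columnRequests n, {x | Realizes (c x) σ}.Infinite)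
    (hcross : ∀ σ ∈ crossRequests n, ∃! x, Realizes (c x) σ) :
    OptimalMatrix n fun k m i => {x | c x (k, m) = i} := by
  refine ⟨fun k m => ⟨fun i => ?_, ?_, ?_⟩, fun m K r i hr => iInter_column_infinite hcol m hr i,
    fun i k m hkm hm => iInter_cross_eq_singleton hcross (fun j ℓ h => ?_) hm⟩
  · have h := iInter_column_infinite hcol m (r := fun _ : Fin 1 => k)
      (Function.injective_of_subsingleton _) fun _ => i
    rwa [Set.iInter_const] at h
  · exact fun i j hij => Set.disjoint_left.mpr fun x hi hj => hij (hi.symm.trans hj)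
  · exact Set.eq_univ_of_forall fun x => Set.mem_iUnion.mpr ⟨_, rfl⟩
  · by_contra hjℓ
    exact hkm j ℓ hjℓ h

end MatrixOfPartitions

/-- For every natural number `n > 1` there is an `n`-optimal matrix of partitions. -/
theorem exists_optimal_matrix : ∀ n : ℕ, 1 < n →
    ∃ a : ℕ → Fin n → ℕ → Set ℕ, OptimalMatrix n a := by
  intro n _
  obtain ⟨c, hcol, hcross⟩ := MatrixOfPartitions.exists_coloring (n := n)
  exact ⟨_, MatrixOfPartitions.optimalMatrix_of_coloring hcol hcross⟩
end

section
/- If T is a Souslin tree (a tree of height ω₁ in which every antichain and every chain is countable) that is normal and ℵ₀-splitting, then the level product T ⊗ T (the union over α < ω₁ of T_α × T_α, ordered componentwise) contains an uncountable antichain. -/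
/-!
Choose for every node `t` two distinct immediate successors `x t ≠ y t`. The pairs
`(x t, y t)` form an antichain of `T ⊗ T`: if `(x s, y s) ≤ (x t, y t)` with `ht s < ht t`, then
`x s` and `y s` both lie below `t` at the same height, so they coincide. There are uncountably
many such pairs because `T` has a node on every level below `ω₁`.
-/

open Cardinal Ordinal Set

universe u

variable {α : Type u}

/-- `ht` is the height function of a tree order on `α`: predecessors of each node form a
chain (together with well-foundedness of `Ordinal`-valued height this means they are
well-ordered), heights are strictly monotone, and below each node every smaller ordinal
is realized as the height of a predecessor. -/
structure IsTreeHt [PartialOrder α] (ht : α → Ordinal) : Prop where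
  pred_chain : ∀ t : α, IsChain (· < ·) (Set.Iio t)
  ht_lt : ∀ s t : α, s < t → ht s < ht t
  ht_onto : ∀ t : α, ∀ β, β < ht t → ∃ s, s < t ∧ ht s = β

/-- Normality: unique root below everything, at least two immediate successors, successors
in every higher nonempty level, unique limits. -/
def IsNormalTree [PartialOrder α] (ht : α → Ordinal) : Prop :=
  (∃ r : α, ∀ t, r ≤ t) ∧
  (∀ t : α, ∃ s u : α, t < s ∧ t < u ∧ s ≠ u ∧ ht s = ht t + 1 ∧ ht u = ht t + 1) ∧
  (∀ t : α, ∀ β, ht t < β → (∃ u : α, ht u = β) → ∃ s, t < s ∧ ht s = β) ∧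
  (∀ s t : α, ht s = ht t → Order.IsSuccLimit (ht s) → Set.Iio s = Set.Iio t → s = t)

/-- Every node has exactly ℵ₀ immediate successors. -/
def Aleph0Splitting [PartialOrder α] (ht : α → Ordinal) : Prop :=
  ∀ t : α, {s | t < s ∧ ht s = ht t + 1}.Infinite ∧ {s | t < s ∧ ht s = ht t + 1}.Countable

/-- A Souslin tree: a tree of height ω₁ all of whose antichains and chains are countable. -/
def IsSouslinTree [PartialOrder α] (ht : α → Ordinal) : Prop :=
  IsTreeHt ht ∧
  (∀ t : α, ht t < (Cardinal.aleph 1).ord) ∧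
  (∀ β, β < (Cardinal.aleph 1).ord → ∃ t : α, ht t = β) ∧
  (∀ A : Set α, IsAntichain (· ≤ ·) A → A.Countable) ∧
  (∀ C : Set α, IsChain (· ≤ ·) C → C.Countable)

namespace IsTreeHt

variable [PartialOrder α] {ht : α → Ordinal} (hT : IsTreeHt ht)
include hT

theorem strictMono : StrictMono ht :=
  hT.ht_lt

theorem le_of_le_of_le_of_ht_le {x y z : α} (hxz : x ≤ z) (hyz : y ≤ z) (h : ht x ≤ ht y) :
    x ≤ y := by
  rcases hyz.eq_or_lt with rfl | hyz
  · exact hxz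
  rcases hxz.eq_or_lt with rfl | hxz
  · exact absurd (hT.strictMono hyz) h.not_gt
  rcases eq_or_ne x y with rfl | hxy
  · exact le_rfl
  rcases hT.pred_chain z hxz hyz hxy with hlt | hlt
  · exact hlt.le
  · exact absurd (hT.strictMono hlt) h.not_gt

theorem eq_of_le_of_le_of_ht_eq {x y z : α} (hxz : x ≤ z) (hyz : y ≤ z) (h : ht x = ht y) :
    x = y :=
  (hT.le_of_le_of_le_of_ht_le hxz hyz h.le).antisymm (hT.le_of_le_of_le_of_ht_le hyz hxz h.ge)

theorem eq_of_immediate_successors_le {t₁ t₂ x₁ y₁ x₂ y₂ : α}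
    (hx₁ : t₁ < x₁) (hxy₁ : x₁ ≠ y₁)
    (hhx₁ : ht x₁ = ht t₁ + 1) (hhy₁ : ht y₁ = ht t₁ + 1)
    (hx₂ : t₂ < x₂) (hy₂ : t₂ < y₂) (hhx₂ : ht x₂ = ht t₂ + 1)
    (hx : x₁ ≤ x₂) (hy : y₁ ≤ y₂) : t₁ = t₂ := by
  have hle : ht t₁ ≤ ht t₂ := by
    simpa [hhx₁, hhx₂] using hT.strictMono.monotone hx
  rcases hle.eq_or_lt with heq | hlt
  · have hx₁₂ : x₁ = x₂ := hT.eq_of_le_of_le_of_ht_eq hx le_rfl (by rw [hhx₁, hhx₂, heq])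
    exact hT.eq_of_le_of_le_of_ht_eq hx₁.le (hx₁₂ ▸ hx₂.le) heq
  · have hsucc : ht t₁ + 1 ≤ ht t₂ := Order.add_one_le_iff.2 hlt
    have hxt₂ : x₁ ≤ t₂ := hT.le_of_le_of_le_of_ht_le hx hx₂.le (hhx₁ ▸ hsucc)
    have hyt₂ : y₁ ≤ t₂ := hT.le_of_le_of_le_of_ht_le hy hy₂.le (hhy₁ ▸ hsucc)
    exact absurd (hT.eq_of_le_of_le_of_ht_eq hxt₂ hyt₂ (hhx₁.trans hhy₁.symm)) hxy₁

end IsTreeHt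

theorem Ordinal.not_countable_Iio_ord_aleph_one : ¬ (Iio (aleph 1).ord).Countable := by
  rw [← Cardinal.le_aleph0_iff_set_countable, Cardinal.mk_Iio_ordinal, Cardinal.card_ord,
    Cardinal.lift_le_aleph0, not_le]
  exact Cardinal.aleph0_lt_aleph_one

theorem uncountable_of_Iio_ord_aleph_one_subset_range {f : α → Ordinal}
    (h : Iio (aleph 1).ord ⊆ range f) : Uncountable α :=
  ⟨fun _ ↦ Ordinal.not_countable_Iio_ord_aleph_one ((countable_range f).mono h)⟩

theorem square_of_souslin_not_ccc_general [PartialOrder α] (ht : α → Ordinal)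
    (hS : IsSouslinTree ht) (hN : IsNormalTree ht) :
    ∃ A : Set (α × α), (∀ p ∈ A, ht p.1 = ht p.2) ∧
      IsAntichain (· ≤ ·) A ∧ ¬ A.Countable := by
  obtain ⟨hT, -, honto, -, -⟩ := hS
  choose x y hx hy hxy hhx hhy using hN.2.1
  have hsplit : ∀ t₁ t₂, (x t₁, y t₁) ≤ (x t₂, y t₂) → t₁ = t₂ := fun t₁ t₂ ⟨hle₁, hle₂⟩ ↦
    hT.eq_of_immediate_successors_le (hx t₁) (hxy t₁) (hhx t₁) (hhy t₁) (hx t₂) (hy t₂)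
      (hhx t₂) hle₁ hle₂
  have : Uncountable α := uncountable_of_Iio_ord_aleph_one_subset_range honto
  refine ⟨range fun t ↦ (x t, y t), ?_, ?_, ?_⟩
  · rintro _ ⟨t, rfl⟩
    exact (hhx t).trans (hhy t).symm
  · rintro _ ⟨t₁, rfl⟩ _ ⟨t₂, rfl⟩ hne hle
    exact hne (by rw [hsplit t₁ t₂ hle])
  · intro hc
    exact not_countable_univ (by simpa using hc.preimage fun t₁ t₂ h ↦ hsplit t₁ t₂ h.le)

/-- The level product `T ⊗ T` of a normal ℵ₀-splitting Souslin tree contains an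
uncountable antichain. -/
theorem square_of_souslin_not_ccc [PartialOrder α] (ht : α → Ordinal)
    (hS : IsSouslinTree ht) (hN : IsNormalTree ht) (hA : Aleph0Splitting ht) :
    ∃ A : Set (α × α), (∀ p ∈ A, ht p.1 = ht p.2) ∧
      IsAntichain (· ≤ ·) A ∧ ¬ A.Countable :=
  square_of_souslin_not_ccc_general ht hS hN
end

section
/- Every free normal Souslin tree is rigid, i.e., it admits no nontrivial automorphism. -/
open Cardinal Ordinal Set

universe u

variable {α : Type u}

/-- The product of the subtrees above the (distinct, same-height) nodes `P i` is c.c.c. -/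
def NFree [PartialOrder α] (ht : α → Ordinal) (n : ℕ) : Prop :=
  ∀ P : Fin n → α, Function.Injective P → (∀ i j, ht (P i) = ht (P j)) →
    ∀ A : Set (Fin n → α),
      (∀ f ∈ A, (∀ i, P i ≤ f i) ∧ ∀ i j, ht (f i) = ht (f j)) →
      IsAntichain (· ≤ ·) A → A.Countable

/-! A nontrivial automorphism `f` moves some node `x` to a node `f x ≠ x` of the same height,
and `f` carries `T(x)` onto `T(f x)`, so `T(x) ⊗ T(f x)` contains a copy of the square
`T(x) ⊗ T(x)`. In a normal tree of height `ω₁` this square has an antichain of size `ℵ₁`: for each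
`δ < ω₁` pick a node `z δ` above `x` at level `ht x + 1 + δ` with two distinct immediate successors
`a δ`, `b δ`. If `(a δ, b δ) ≤ (a ε, b ε)` with `δ < ε`, then `a δ` and `b δ` both lie below `z ε`,
hence are comparable, which is impossible for distinct nodes of the same height. This contradicts
2-freeness. -/

universe v

section

variable [PartialOrder α] {ht : α → Ordinal.{v}}

namespace IsTreeHt

theorem ht_strictMono (hT : IsTreeHt ht) : StrictMono ht := hT.ht_lt

theorem le_of_le_of_le_of_ht_le_s6 (hT : IsTreeHt ht) {a b c : α} (hac : a ≤ c) (hbc : b ≤ c)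
    (h : ht a ≤ ht b) : a ≤ b := by
  rcases hac.lt_or_eq with hac | rfl
  · rcases hbc.lt_or_eq with hbc | rfl
    · rcases eq_or_ne a b with rfl | hab
      · exact le_rfl
      rcases hT.pred_chain c hac hbc hab with hab | hba
      · exact hab.le
      · exact absurd h (not_le.2 (hT.ht_strictMono hba))
    · exact hac.le
  · rcases hbc.lt_or_eq with hba | rfl
    · exact absurd h (not_le.2 (hT.ht_strictMono hba))
    · exact le_rfl

theorem eq_of_le_of_le_of_ht_eq_s6 (hT : IsTreeHt ht) {a b c : α} (hac : a ≤ c) (hbc : b ≤ c)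
    (h : ht a = ht b) : a = b :=
  le_antisymm (hT.le_of_le_of_le_of_ht_le_s6 hac hbc h.le) (hT.le_of_le_of_le_of_ht_le_s6 hbc hac h.ge)

theorem ht_le_ht_of_strictMono (hT : IsTreeHt ht) {g : α → α} (hg : StrictMono g) (t : α) :
    ht t ≤ ht (g t) := by
  have := hT.ht_strictMono.wellFoundedLT
  induction t using WellFoundedLT.induction with
  | _ t IH =>
    refine le_of_forall_lt fun β hβ => ?_
    obtain ⟨s, hst, rfl⟩ := hT.ht_onto t β hβ
    exact (IH s hst).trans_lt (hT.ht_strictMono (hg hst))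

theorem ht_orderIso_apply (hT : IsTreeHt ht) (f : α ≃o α) (t : α) : ht (f t) = ht t := by
  refine le_antisymm ?_ (hT.ht_le_ht_of_strictMono f.strictMono t)
  simpa using hT.ht_le_ht_of_strictMono f.symm.strictMono (f t)

end IsTreeHt

theorem uncountable_Iio_ord_aleph_one : Uncountable (Iio (ℵ₁ : Cardinal.{v}).ord) := by
  rw [← aleph0_lt_mk_iff, Cardinal.mk_Iio_ordinal, Cardinal.card_ord, aleph0_lt_lift]
  exact aleph0_lt_aleph_one

theorem IsNormalTree.exists_split_above (hN : IsNormalTree ht) {x : α} {β : Ordinal.{v}}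
    (hxβ : ht x < β) (hβ : ∃ t, ht t = β) :
    ∃ z a b : α, x < z ∧ ht z = β ∧ z < a ∧ z < b ∧ a ≠ b ∧ ht a = β + 1 ∧ ht b = β + 1 := by
  obtain ⟨z, hxz, rfl⟩ := hN.2.2.1 x β hxβ hβ
  obtain ⟨a, b, hza, hzb, hab, ha, hb⟩ := hN.2.1 z
  exact ⟨z, a, b, hxz, rfl, hza, hzb, hab, ha, hb⟩

theorem exists_uncountable_antichain_square (hT : IsTreeHt ht) (hN : IsNormalTree ht)
    (hbd : ∀ t, ht t < (ℵ₁ : Cardinal.{v}).ord)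
    (hlev : ∀ β < (ℵ₁ : Cardinal.{v}).ord, ∃ t, ht t = β) (x : α) :
    ∃ p : Iio (ℵ₁ : Cardinal.{v}).ord → α × α,
      (∀ δ, x ≤ (p δ).1 ∧ x ≤ (p δ).2 ∧ ht (p δ).1 = ht (p δ).2) ∧ ∀ δ ε, p δ ≤ p ε → δ = ε := by
  have hω₁ : IsPrincipal (· + ·) (ℵ₁ : Cardinal.{v}).ord :=
    isPrincipal_add_ord (aleph0_le_aleph 1)
  have hone : (1 : Ordinal) < (ℵ₁ : Cardinal.{v}).ord := by
    rw [Cardinal.lt_ord, card_one]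
    exact one_lt_aleph0.trans aleph0_lt_aleph_one
  have hsplit (δ : Iio (ℵ₁ : Cardinal.{v}).ord) := hN.exists_split_above
    ((lt_add_one (ht x)).trans_le le_self_add) (hlev _ (hω₁ (hω₁ (hbd x) hone) δ.2))
  choose z a b hxz hz hza hzb hab ha hb using hsplit
  refine ⟨fun δ => (a δ, b δ), fun δ => ⟨(hxz δ).le.trans (hza δ).le,
    (hxz δ).le.trans (hzb δ).le, (ha δ).trans (hb δ).symm⟩, ?_⟩
  rintro δ ε ⟨haa, hbb⟩
  have hle : δ.1 ≤ ε.1 := by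
    have := (hT.ht_strictMono (hza δ)).trans_le (hT.ht_strictMono.monotone haa)
    rwa [hz, ha, Order.lt_add_one_iff, add_le_add_iff_left] at this
  have hge : ε.1 ≤ δ.1 := by
    by_contra! hlt
    have hsucc : ht (a δ) ≤ ht (z ε) := by
      rw [ha, hz, Order.add_one_le_iff, add_lt_add_iff_left]
      exact hlt
    refine hab δ (hT.eq_of_le_of_le_of_ht_eq_s6 (c := z ε) ?_ ?_ ((ha δ).trans (hb δ).symm))
    · exact hT.le_of_le_of_le_of_ht_le_s6 haa (hza ε).le hsucc
    · exact hT.le_of_le_of_le_of_ht_le_s6 hbb (hzb ε).le ((hb δ).trans (ha δ).symm ▸ hsucc)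
  exact Subtype.ext (le_antisymm hle hge)

theorem NFree.countable_of_isAntichain_pairs (hfree : NFree ht 2) {x y : α} (hxy : x ≠ y)
    (hht : ht x = ht y) {ι : Type*} (p : ι → α × α)
    (hp : ∀ i, x ≤ (p i).1 ∧ y ≤ (p i).2 ∧ ht (p i).1 = ht (p i).2)
    (hanti : ∀ i j, p i ≤ p j → i = j) : Countable ι := by
  let g : ι → Fin 2 → α := fun i => ![(p i).1, (p i).2]
  have hg_le {i j : ι} (h : g i ≤ g j) : i = j :=
    hanti i j ⟨by simpa [g] using h 0, by simpa [g] using h 1⟩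
  have hcount : (range g).Countable := by
    refine hfree ![x, y] ?_ ?_ (range g) ?_ ?_
    · intro i j hij
      fin_cases i <;> fin_cases j <;> simp_all
    · intro i j
      fin_cases i <;> fin_cases j <;> simp [hht]
    · rintro _ ⟨i, rfl⟩
      refine ⟨fun k => ?_, fun k l => ?_⟩
      · fin_cases k <;> simp [g, hp]
      · fin_cases k <;> fin_cases l <;> simp [g, hp]
    · rintro _ ⟨i, rfl⟩ _ ⟨j, rfl⟩ hne h
      exact hne (congrArg g (hg_le h))
  have : Countable (range g) := hcount.to_subtype
  exact (rangeFactorization_injective.2 fun i j h => hg_le h.le).countable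

end

/-- Every free normal Souslin tree is rigid. -/
theorem free_implies_rigid [PartialOrder α] (ht : α → Ordinal)
    (hS : IsSouslinTree ht) (hN : IsNormalTree ht)
    (hfree : ∀ n : ℕ, NFree ht (n + 1)) :
    ∀ f : α ≃o α, ∀ x : α, f x = x := by
  intro f x
  by_contra hfx
  obtain ⟨hT, hbd, hlev, -, -⟩ := hS
  obtain ⟨p, hp, hanti⟩ := exists_uncountable_antichain_square hT hN hbd hlev x
  have : Countable (Iio (ℵ₁ : Cardinal).ord) := by
    refine (hfree 1).countable_of_isAntichain_pairs (Ne.symm hfx) (hT.ht_orderIso_apply f x).symm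
      (fun δ => ((p δ).1, f (p δ).2)) (fun δ => ⟨(hp δ).1, f.monotone (hp δ).2.1, ?_⟩)
      fun δ ε h => hanti δ ε ⟨h.1, f.le_iff_le.1 h.2⟩
    rw [hT.ht_orderIso_apply, (hp δ).2.2]
  exact uncountable_Iio_ord_aleph_one.not_countable this
end

section
/- Let T be a homogeneous normal Souslin tree with at least two nodes at some level. Then T is not 2-free: there exist distinct nodes s, t of the same height such that T(s) ⊗ T(t) has an uncountable antichain. -/
open Cardinal Ordinal Set

universe u

variable {α : Type u}

/-!
Fix `s ≠ t` of equal height and an isomorphism `φ : T(s) ≃o T(t)`. For every countable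
`β > ht s` choose two distinct immediate successors `y β`, `z β` of a node of height `β`
above `s`. If `(y β, z β) ≤ (y γ, z γ)` with `β ≠ γ`, then `β < γ`, and `y β`, `z β` both lie
below the common predecessor of `y γ` and `z γ`; having the same height, they would be equal.
Transporting the second coordinate by `φ`, the pairs `(y β, φ (z β))` form an uncountable
antichain of `T(s) ⊗ T(t)`.
-/

theorem Ordinal.countable_Iio_iff {o : Ordinal} : (Iio o).Countable ↔ o < ω₁ := by
  rw [← le_aleph0_iff_set_countable, Cardinal.mk_Iio_ordinal, Cardinal.lift_le_aleph0,
    lt_omega_iff_card_lt, Cardinal.lt_aleph_one_iff]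

theorem Ordinal.not_countable_Ioo_omega_one {o : Ordinal} (ho : o < ω₁) :
    ¬ (Ioo o ω₁).Countable := by
  intro h
  have hcover : Iio ω₁ ⊆ Iio (Order.succ o) ∪ Ioo o ω₁ := fun β hβ => by
    rcases le_or_gt β o with hle | hlt
    · exact Or.inl (Order.lt_succ_of_le hle)
    · exact Or.inr ⟨hlt, hβ⟩
  have hsucc : Order.succ o < ω₁ := (isSuccLimit_omega 1).succ_lt ho
  exact (lt_irrefl ω₁) (countable_Iio_iff.mp
    (((countable_Iio_iff.mpr hsucc).union h).mono hcover))

def AreSiblings [LT α] (ht : α → Ordinal) (y z : α) : Prop :=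
  y ≠ z ∧ ∃ x, x < y ∧ x < z ∧ ht y = ht x + 1 ∧ ht z = ht x + 1

theorem AreSiblings.ht_eq [LT α] {ht : α → Ordinal} {y z : α} (h : AreSiblings ht y z) :
    ht y = ht z := by
  obtain ⟨-, x, -, -, hy, hz⟩ := h
  rw [hy, hz]

namespace IsTreeHt

variable [PartialOrder α] {ht : α → Ordinal} (hT : IsTreeHt ht)
include hT

theorem monotone : Monotone ht := fun _ _ h => by
  rcases h.lt_or_eq with h | rfl
  exacts [(hT.ht_lt _ _ h).le, le_rfl]

theorem le_of_ht_le {a b c : α} (hac : a ≤ c) (hbc : b ≤ c) (hab : ht a ≤ ht b) : a ≤ b := by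
  rcases hbc.lt_or_eq with hbc | rfl
  · rcases hac.lt_or_eq with hac | rfl
    · rcases eq_or_ne a b with rfl | hne
      · exact le_rfl
      · exact ((hT.pred_chain c hac hbc hne).resolve_right
          fun hba => (hT.ht_lt _ _ hba).not_ge hab).le
    · exact absurd (hT.ht_lt _ _ hbc) hab.not_gt
  · exact hac

theorem eq_of_ht_eq {a b c : α} (hac : a ≤ c) (hbc : b ≤ c) (hab : ht a = ht b) : a = b :=
  (hT.le_of_ht_le hac hbc hab.le).antisymm (hT.le_of_ht_le hbc hac hab.ge)

theorem ht_orderIso_le {s t : α} (hst : ht s = ht t)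
    (φ : {x : α // s ≤ x} ≃o {x : α // t ≤ x}) (x : {x : α // s ≤ x}) :
    ht (φ x : α) ≤ ht x := by
  induction hx : ht (x : α) using WellFoundedLT.induction generalizing x with
  | _ β IH =>
    by_contra! hlt
    obtain ⟨u, hu, huβ⟩ := hT.ht_onto _ β hlt
    have htu : t ≤ u :=
      hT.le_of_ht_le (φ x).2 hu.le (by rw [huβ, ← hst, ← hx]; exact hT.monotone x.2)
    have hlt' : φ.symm ⟨u, htu⟩ < x := by
      simpa using φ.symm.strictMono (show (⟨u, htu⟩ : {x // t ≤ x}) < φ x from hu)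
    have hvβ : ht (φ.symm ⟨u, htu⟩ : α) < β := hx ▸ hT.ht_lt _ _ hlt'
    have := IH _ hvβ _ rfl
    simp only [OrderIso.apply_symm_apply] at this
    exact (this.trans_lt hvβ).ne huβ

theorem ht_orderIso {s t : α} (hst : ht s = ht t)
    (φ : {x : α // s ≤ x} ≃o {x : α // t ≤ x}) (x : {x : α // s ≤ x}) :
    ht (φ x : α) = ht x :=
  (hT.ht_orderIso_le hst φ x).antisymm <| by
    simpa using hT.ht_orderIso_le hst.symm φ.symm (φ x)

theorem eq_of_siblings_of_le {y z y' z' : α} (h : AreSiblings ht y z)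
    (h' : AreSiblings ht y' z') (hy : y ≤ y') (hz : z ≤ z') : y = y' := by
  by_contra hne
  obtain ⟨-, x', hxy', hxz', hy', hz'⟩ := h'
  have hyx' : ht y ≤ ht x' := Order.lt_add_one_iff.mp (hy' ▸ hT.ht_lt _ _ (hy.lt_of_ne hne))
  have hzx' : ht z ≤ ht x' := h.ht_eq ▸ hyx'
  exact h.1 <| hT.eq_of_ht_eq (hT.le_of_ht_le hy hxy'.le hyx')
    (hT.le_of_ht_le hz hxz'.le hzx') h.ht_eq

end IsTreeHt

theorem IsNormalTree.exists_siblings_above [PartialOrder α] {ht : α → Ordinal}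
    (hN : IsNormalTree ht) {s : α} {β : Ordinal} (hsβ : ht s < β) (hβ : ∃ u, ht u = β) :
    ∃ y z, s < y ∧ s < z ∧ AreSiblings ht y z ∧ ht y = β + 1 := by
  obtain ⟨x, hsx, rfl⟩ := hN.2.2.1 s β hsβ hβ
  obtain ⟨y, z, hxy, hxz, hyz, hy, hz⟩ := hN.2.1 x
  exact ⟨y, z, hsx.trans hxy, hsx.trans hxz, ⟨hyz, x, hxy, hxz, hy, hz⟩, hy⟩

theorem homogeneous_not_two_free_general [PartialOrder α] (ht : α → Ordinal)
    (hS : IsSouslinTree ht) (hN : IsNormalTree ht)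
    (hhom : ∀ s t : α, ht s = ht t →
      Nonempty ({x : α // s ≤ x} ≃o {x : α // t ≤ x}))
    (htwo : ∃ s t : α, ht s = ht t ∧ s ≠ t) :
    ∃ s t : α, s ≠ t ∧ ht s = ht t ∧
      ∃ A : Set (α × α), (∀ p ∈ A, s ≤ p.1 ∧ t ≤ p.2 ∧ ht p.1 = ht p.2) ∧
        IsAntichain (· ≤ ·) A ∧ ¬ A.Countable := by
  obtain ⟨s, t, hst, hne⟩ := htwo
  obtain ⟨hT, hht, hlev, -⟩ := hS
  obtain ⟨φ⟩ := hhom s t hst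
  rw [ord_aleph] at hht hlev
  have hpairs (β : Ioo (ht s) ω₁) :
      ∃ y z, s < y ∧ s < z ∧ AreSiblings ht y z ∧ ht y = β + 1 :=
    hN.exists_siblings_above β.2.1 (hlev β β.2.2)
  choose y z hsy hsz hyz hy using hpairs
  have hy_inj : Function.Injective y := fun β γ h =>
    Subtype.ext (Order.add_one_inj.mp ((hy β).symm.trans (h ▸ hy γ)))
  let f (β : Ioo (ht s) ω₁) : α × α := (y β, φ ⟨z β, (hsz β).le⟩)
  refine ⟨s, t, hne, hst, range f, ?_, ?_, ?_⟩
  · rintro _ ⟨β, rfl⟩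
    exact ⟨(hsy β).le, (φ _).2, (hyz β).ht_eq.trans (hT.ht_orderIso hst φ ⟨z β, _⟩).symm⟩
  · rintro _ ⟨β, rfl⟩ _ ⟨γ, rfl⟩ hβγ hle
    exact hβγ <| congrArg f <| hy_inj <|
      hT.eq_of_siblings_of_le (hyz β) (hyz γ) hle.1 (φ.le_iff_le.mp hle.2)
  · intro hc
    have := hc.to_subtype
    have hf_inj : Function.Injective f := fun β γ h => hy_inj (congrArg Prod.fst h)
    exact not_countable_Ioo_omega_one (hht s) <| countable_coe_iff.mp <|
      (rangeFactorization_injective.mpr hf_inj).countable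

/-- A homogeneous normal Souslin tree with at least two nodes at some level is not
2-free. -/
theorem homogeneous_not_two_free [PartialOrder α] (ht : α → Ordinal)
    (hS : IsSouslinTree ht) (hN : IsNormalTree ht) (hA : Aleph0Splitting ht)
    (hhom : ∀ s t : α, ht s = ht t →
      Nonempty ({x : α // s ≤ x} ≃o {x : α // t ≤ x}))
    (htwo : ∃ s t : α, ht s = ht t ∧ s ≠ t) :
    ∃ s t : α, s ≠ t ∧ ht s = ht t ∧
      ∃ A : Set (α × α), (∀ p ∈ A, s ≤ p.1 ∧ t ≤ p.2 ∧ ht p.1 = ht p.2) ∧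
        IsAntichain (· ≤ ·) A ∧ ¬ A.Countable :=
  homogeneous_not_two_free_general ht hS hN hhom htwo
end

section
/- Let T be a normal ℵ₀-splitting tree and let ≡₀, …, ≡_{n-1} be nice tree equivalence relations on T such that for every level α and every choice of classes c_i ∈ (T/≡_i)_α (i < n), the intersection ⋂_{i<n} c_i is a singleton {t} with t ∈ T_α. Then the map t ↦ (t/≡_0, …, t/≡_{n-1}) is an isomorphism of trees between T and the tree product ⊗_{i<n} T/≡_i. -/
open Cardinal Ordinal Set

universe u

variable {α : Type u}

/-- `E` is a nice tree equivalence relation on the tree `(α, ht)`: it respects levels, is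
compatible with the tree order, is nice (equivalence lifts upwards), and the quotient is a
normal ℵ₀-splitting tree (each node has ℵ₀ many classes of immediate successors, and
classes at limit levels are determined by their predecessor classes). -/
structure IsNiceTER [PartialOrder α] (ht : α → Ordinal) (E : α → α → Prop) : Prop where
  equiv : Equivalence E
  levels : ∀ s t : α, E s t → ht s = ht t
  compat : ∀ s r t u : α, ht s = ht r → s < t → r < u → E t u → E s r
  nice : ∀ s r t : α, E s r → s < t → ∃ u : α, E t u ∧ r < u
  quot_splits : ∀ t : α,
    {c : Set α | ∃ s, t < s ∧ ht s = ht t + 1 ∧ c = {u | E s u}}.Infinite ∧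
    {c : Set α | ∃ s, t < s ∧ ht s = ht t + 1 ∧ c = {u | E s u}}.Countable
  quot_lim : ∀ s t : α, ht s = ht t → Order.IsSuccLimit (ht s) →
    (∀ r, r < s → ∃ r', r' < t ∧ E r r') → E s t


namespace IsTreeHt

variable [PartialOrder α] {ht : α → Ordinal}

theorem ht_mono (hT : IsTreeHt ht) : Monotone ht := fun s t hst =>
  hst.eq_or_lt.elim (fun h => h ▸ le_rfl) fun h => (hT.ht_lt s t h).le

theorem eq_of_le_of_ht_eq (hT : IsTreeHt ht) {s t : α} (hst : s ≤ t) (hh : ht s = ht t) :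
    s = t :=
  hst.eq_or_lt.resolve_right fun h => (hT.ht_lt s t h).ne hh

theorem exists_le_ht_eq (hT : IsTreeHt ht) {t : α} {β : Ordinal} (hβ : β ≤ ht t) :
    ∃ u ≤ t, ht u = β := by
  rcases hβ.eq_or_lt with rfl | hlt
  · exact ⟨t, le_rfl, rfl⟩
  · obtain ⟨u, hut, hu⟩ := hT.ht_onto t β hlt
    exact ⟨u, hut.le, hu⟩

end IsTreeHt

namespace IsNiceTER

variable [PartialOrder α] {ht : α → Ordinal} {E : α → α → Prop}

/-- If `[s] ≤ [t]` in the quotient, then `s` is equivalent to the node of `T` below `t`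
on the level of `s`. -/
theorem rel_of_le_of_ht_eq (hT : IsTreeHt ht) (hE : IsNiceTER ht E) {s t u s' t' : α}
    (hss' : E s s') (htt' : E t t') (hle : s' ≤ t') (hut : u ≤ t) (hus : ht u = ht s) :
    E s u := by
  have hus' : ht u = ht s' := hus.trans (hE.levels s s' hss')
  rcases hle.eq_or_lt with rfl | hlt
  · have hut_eq : u = t :=
      hT.eq_of_le_of_ht_eq hut (hus'.trans (hE.levels t s' htt').symm)
    exact hut_eq ▸ hE.equiv.trans hss' (hE.equiv.symm htt')
  · have hu_lt : u < t := hut.lt_of_ne fun h => by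
      have : ht s' < ht t' := hT.ht_lt s' t' hlt
      rw [← hus', h, hE.levels t t' htt'] at this
      exact this.false
    exact hE.equiv.trans hss' (hE.equiv.symm (hE.compat u s' t t' hus' hu_lt hlt htt'))

end IsNiceTER

theorem le_of_forall_quotient_le [PartialOrder α] {ht : α → Ordinal} (hT : IsTreeHt ht)
    {ι : Type*} [Nonempty ι] {E : ι → α → α → Prop} (hE : ∀ i, IsNiceTER ht (E i))
    (hinj : ∀ s t : α, (∀ i, E i s t) → s = t) {s t : α}
    (h : ∀ i, ∃ s' t' : α, E i s s' ∧ E i t t' ∧ s' ≤ t') : s ≤ t := by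
  obtain ⟨i₀⟩ := ‹Nonempty ι›
  obtain ⟨s₀, t₀, hs₀, ht₀, hle₀⟩ := h i₀
  have hht : ht s ≤ ht t := by
    rw [(hE i₀).levels s s₀ hs₀, (hE i₀).levels t t₀ ht₀]
    exact hT.ht_mono hle₀
  obtain ⟨u, hut, hu⟩ := hT.exists_le_ht_eq hht
  have hsu : ∀ i, E i s u := fun i => by
    obtain ⟨s', t', hss', htt', hle⟩ := h i
    exact (hE i).rel_of_le_of_ht_eq hT hss' htt' hle hut hu
  exact hinj s u hsu ▸ hut

theorem decomposition_into_quotients_general [PartialOrder α] (ht : α → Ordinal)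
    (hT : IsTreeHt ht)
    (n : ℕ) (hn : 0 < n) (E : Fin n → α → α → Prop)
    (hE : ∀ i, IsNiceTER ht (E i))
    (hsing : ∀ c : Fin n → α, (∀ i j, ht (c i) = ht (c j)) →
      ∃! t : α, ∀ i, E i (c i) t) :
    (∀ s t : α, (∀ i, E i s t) → s = t) ∧
    (∀ c : Fin n → α, (∀ i j, ht (c i) = ht (c j)) → ∃ t : α, ∀ i, E i (c i) t) ∧
    (∀ s t : α, s ≤ t ↔ ∀ i, ∃ s' t' : α, E i s s' ∧ E i t t' ∧ s' ≤ t') := by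
  have hinj : ∀ s t : α, (∀ i, E i s t) → s = t := fun s t hst =>
    (hsing (fun _ => s) fun _ _ => rfl).unique (fun i => (hE i).equiv.refl s) hst
  have : Nonempty (Fin n) := ⟨⟨0, hn⟩⟩
  refine ⟨hinj, fun c hc => (hsing c hc).exists, fun s t => ⟨fun hst i => ?_, ?_⟩⟩
  · exact ⟨s, t, (hE i).equiv.refl s, (hE i).equiv.refl t, hst⟩
  · exact le_of_forall_quotient_le hT hE hinj

/-- If nice tree equivalence relations `E 0, …, E (n-1)` on a normal ℵ₀-splitting tree
are such that any choice of classes on a common level intersects in exactly one node,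
then `t ↦ (t/E 0, …, t/E (n-1))` is an isomorphism of `T` with the tree product of the
quotients: it is injective, surjective onto the product of the quotient levels, and both
it and its inverse preserve the order (the quotient order being the one induced on
classes). -/
theorem decomposition_into_quotients [PartialOrder α] (ht : α → Ordinal)
    (hT : IsTreeHt ht) (hN : IsNormalTree ht) (hA : Aleph0Splitting ht)
    (n : ℕ) (hn : 0 < n) (E : Fin n → α → α → Prop)
    (hE : ∀ i, IsNiceTER ht (E i))
    (hsing : ∀ c : Fin n → α, (∀ i j, ht (c i) = ht (c j)) →
      ∃! t : α, ∀ i, E i (c i) t) :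
    (∀ s t : α, (∀ i, E i s t) → s = t) ∧
    (∀ c : Fin n → α, (∀ i j, ht (c i) = ht (c j)) → ∃ t : α, ∀ i, E i (c i) t) ∧
    (∀ s t : α, s ≤ t ↔ ∀ i, ∃ s' t' : α, E i s s' ∧ E i t t' ∧ s' ≤ t') :=
  decomposition_into_quotients_general ht hT n hn E hE hsing
end
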